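/- For every ε > 0 there exists δ > 0 such that for every A with 0 < A ≤ δ and every function q satisfying the hypotheses with q(0) = A, one has ∫_{-∞}^{∞} q'(s)² ds ≤ ε. -/

import Mathlib

open MeasureTheory Filter Real

open Set

/-!
On `s ≥ 0` the profile decreases, so the equation forces `q'' ≥ -μ`, hence `-μ s ≤ q'(s) ≤ 0`.
The energy `E = q'² q / 2 + μ q² / 2` satisfies `E' = q'³ / 2 - a s q'² q - s q'² / 3 ≤ -s q'² / 3`,
so `∫₀^T s q'² ≤ 3 E(0) = 3 μ A² / 2` for every `T`. Splitting `∫₀^∞ q'²` at `c = √A`, the part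
near `0` is at most `μ² c³ / 3` and the tail at most `3 μ A² / (2 c)`; with evenness this gives
`∫ q'² ≤ (2 μ² / 3 + 3 μ) A^{3/2}`, which is small for small `A`.
-/

lemma deriv_nonpos_of_antitoneOn_Ioi {f : ℝ → ℝ} {x₀ x : ℝ} (hf : AntitoneOn f (Ioi x₀))
    (hx : x₀ < x) : deriv f x ≤ 0 := by
  rw [← derivWithin_of_isOpen isOpen_Ioi hx]
  exact hf.derivWithin_nonpos

lemma deriv_neg_of_even {f : ℝ → ℝ} (hf : ∀ x, f (-x) = f x) (x : ℝ) :
    deriv f (-x) = -deriv f x := by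
  have h := deriv_comp_neg f x
  rw [funext hf] at h
  linarith

lemma integral_deriv_sq_of_even {f : ℝ → ℝ} (hf : ∀ x, f (-x) = f x) :
    ∫ x, deriv f x ^ 2 = 2 * ∫ x in Ioi 0, deriv f x ^ 2 := by
  rw [← integral_comp_abs]
  congr 1 with x
  rcases abs_choice x with h | h <;> simp [h, deriv_neg_of_even hf]

lemma intervalIntegral_sq_le_of_abs_le_mul {f : ℝ → ℝ} {m c : ℝ} (hc : 0 ≤ c)
    (hf : Continuous f) (hfm : ∀ x ∈ Icc 0 c, |f x| ≤ m * x) :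
    ∫ x in 0..c, f x ^ 2 ≤ m ^ 2 * c ^ 3 / 3 :=
  calc ∫ x in 0..c, f x ^ 2 ≤ ∫ x in 0..c, m ^ 2 * x ^ 2 := by
        refine intervalIntegral.integral_mono_on hc
          (Continuous.intervalIntegrable (by fun_prop) _ _)
          (Continuous.intervalIntegrable (by fun_prop) _ _) fun x hx => ?_
        rw [← sq_abs, ← mul_pow]
        exact pow_le_pow_left₀ (abs_nonneg _) (hfm x hx) 2
    _ = m ^ 2 * c ^ 3 / 3 := by
        rw [intervalIntegral.integral_const_mul, integral_pow]; ring

lemma setIntegral_Ioi_le_of_intervalIntegral_mul_le {g : ℝ → ℝ} {c B : ℝ} (hc : 0 < c)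
    (hg : Continuous g) (hg0 : ∀ x, 0 ≤ g x) (hint : IntegrableOn g (Ioi c))
    (hB : ∀ T, c ≤ T → ∫ x in 0..T, x * g x ≤ B) :
    ∫ x in Ioi c, g x ≤ B / c := by
  refine le_of_tendsto (intervalIntegral_tendsto_integral_Ioi c hint tendsto_id) ?_
  filter_upwards [eventually_ge_atTop c] with T hT
  have hweight : ∫ x in c..T, g x ≤ ∫ x in c..T, x * g x / c :=
    intervalIntegral.integral_mono_on hT (Continuous.intervalIntegrable (by fun_prop) _ _)
      (Continuous.intervalIntegrable (by fun_prop) _ _) fun x hx => by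
      rw [le_div_iff₀ hc]
      nlinarith [hg0 x, hx.1]
  have hsplit : ∫ x in c..T, x * g x ≤ ∫ x in 0..T, x * g x := by
    rw [← intervalIntegral.integral_add_adjacent_intervals (a := 0) (b := c) (c := T)
      (Continuous.intervalIntegrable (by fun_prop) _ _)
      (Continuous.intervalIntegrable (by fun_prop) _ _)]
    have : 0 ≤ ∫ x in 0..c, x * g x :=
      intervalIntegral.integral_nonneg hc.le fun x hx => mul_nonneg hx.1 (hg0 x)
    linarith
  calc ∫ x in c..T, g x ≤ (∫ x in c..T, x * g x) / c := by
        rwa [intervalIntegral.integral_div] at hweight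
    _ ≤ B / c := by gcongr; exact hsplit.trans (hB T hT)

def ProfileODE (a μ : ℝ) (q : ℝ → ℝ) : Prop :=
  ∀ s, deriv (deriv q) s * q s + a * s * deriv q s * q s + μ * q s + (1 / 3) * s * deriv q s = 0

noncomputable def profileEnergy (μ : ℝ) (q : ℝ → ℝ) (s : ℝ) : ℝ :=
  deriv q s ^ 2 * q s / 2 + μ * q s ^ 2 / 2

section ProfileODE

variable {a μ : ℝ} {q : ℝ → ℝ}

lemma neg_le_deriv_deriv_of_ode (ha : 0 ≤ a) (hode : ProfileODE a μ q) (hpos : ∀ s, 0 < q s)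
    (hq'nonpos : ∀ s, 0 ≤ s → deriv q s ≤ 0) {s : ℝ} (hs : 0 ≤ s) :
    -μ ≤ deriv (deriv q) s := by
  have hq' : 0 ≤ -deriv q s := neg_nonneg.2 (hq'nonpos s hs)
  have hdrift : 0 ≤ a * s * -deriv q s * q s := by have := hpos s; positivity
  have hstretch : 0 ≤ s * -deriv q s := by positivity
  have : -μ * q s ≤ deriv (deriv q) s * q s := by linarith [hode s]
  exact le_of_mul_le_mul_right this (hpos s)

lemma neg_mul_le_deriv_of_ode (ha : 0 ≤ a) (hd' : Differentiable ℝ (deriv q))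
    (hode : ProfileODE a μ q) (hpos : ∀ s, 0 < q s) (hq'nonpos : ∀ s, 0 ≤ s → deriv q s ≤ 0)
    (hq'0 : deriv q 0 = 0) {s : ℝ} (hs : 0 ≤ s) : -(μ * s) ≤ deriv q s := by
  have := (convex_Ici 0).mul_sub_le_image_sub_of_le_deriv hd'.continuous.continuousOn
    hd'.differentiableOn (C := -μ) (fun x hx => neg_le_deriv_deriv_of_ode ha hode hpos hq'nonpos
      (interior_subset hx)) 0 self_mem_Ici s hs hs
  simpa [hq'0] using this

lemma hasDerivAt_profileEnergy (hd : Differentiable ℝ q) (hd' : Differentiable ℝ (deriv q))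
    (hode : ProfileODE a μ q) (s : ℝ) :
    HasDerivAt (profileEnergy μ q)
      (deriv q s ^ 3 / 2 - a * s * deriv q s ^ 2 * q s - s * deriv q s ^ 2 / 3) s := by
  have h1 := (hd s).hasDerivAt
  have h2 := (hd' s).hasDerivAt
  refine ((((h2.pow 2).mul h1).div_const 2).add
    (((h1.pow 2).const_mul μ).div_const 2)).congr_deriv ?_
  simp only [Pi.pow_apply]
  linear_combination deriv q s * hode s

lemma profileEnergy_nonneg (hμ : 0 ≤ μ) (hpos : ∀ s, 0 < q s) (s : ℝ) :
    0 ≤ profileEnergy μ q s := by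
  have := hpos s
  unfold profileEnergy
  positivity

lemma intervalIntegral_mul_deriv_sq_le (ha : 0 ≤ a) (hμ : 0 ≤ μ) (hd : Differentiable ℝ q)
    (hd' : Differentiable ℝ (deriv q)) (hode : ProfileODE a μ q) (hpos : ∀ s, 0 < q s)
    (hq'nonpos : ∀ s, 0 ≤ s → deriv q s ≤ 0) {T : ℝ} (hT : 0 ≤ T) :
    ∫ s in 0..T, s * deriv q s ^ 2 ≤ 3 * profileEnergy μ q 0 := by
  have hderiv := fun s => (hasDerivAt_profileEnergy hd hd' hode s).const_mul (-3)
  have hcont : Continuous (profileEnergy μ q) := continuous_iff_continuousAt.2 fun s =>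
    (hasDerivAt_profileEnergy hd hd' hode s).continuousAt
  have hq'cont := hd'.continuous
  have hdissip := intervalIntegral.integral_le_sub_of_hasDeriv_right_of_le
    (g := fun s => -3 * profileEnergy μ q s) hT (continuous_const.mul hcont).continuousOn
    (fun s _ => (hderiv s).hasDerivWithinAt)
    (by fun_prop : Continuous fun s => s * deriv q s ^ 2).integrableOn_Icc
    fun s hs => by
      have hq' : 0 ≤ -deriv q s := neg_nonneg.2 (hq'nonpos s hs.1.le)
      have hdrift : 0 ≤ a * s * deriv q s ^ 2 * q s := by
        have := hpos s; have := hs.1.le; positivity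
      nlinarith [pow_nonneg hq' 3]
  linarith [profileEnergy_nonneg hμ hpos T]

theorem integral_deriv_sq_le_of_ode (ha : 0 ≤ a) (hμ : 0 ≤ μ) (hq : ContDiff ℝ 2 q)
    (hode : ProfileODE a μ q) (hq'0 : deriv q 0 = 0) (hpos : ∀ s, 0 < q s)
    (heven : ∀ s, q (-s) = q s) (hanti : AntitoneOn q (Ioi 0))
    (hint : Integrable fun s => deriv q s ^ 2) :
    ∫ s, deriv q s ^ 2 ≤ (2 * μ ^ 2 / 3 + 3 * μ) * (q 0 * √(q 0)) := by
  have hd : Differentiable ℝ q := hq.differentiable (by norm_num)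
  have hd' : Differentiable ℝ (deriv q) := hq.differentiable_deriv_two
  have hq'nonpos : ∀ s, 0 ≤ s → deriv q s ≤ 0 := fun s hs =>
    hs.eq_or_lt.elim (fun h => h ▸ hq'0.le) (deriv_nonpos_of_antitoneOn_Ioi hanti)
  set c := √(q 0)
  have hc : 0 < c := sqrt_pos.2 (hpos 0)
  have hnear : ∫ s in 0..c, deriv q s ^ 2 ≤ μ ^ 2 * c ^ 3 / 3 :=
    intervalIntegral_sq_le_of_abs_le_mul hc.le hd'.continuous fun s hs => by
      rw [abs_of_nonpos (hq'nonpos s hs.1)]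
      linarith [neg_mul_le_deriv_of_ode ha hd' hode hpos hq'nonpos hq'0 hs.1]
  have htail : ∫ s in Ioi c, deriv q s ^ 2 ≤ 3 * profileEnergy μ q 0 / c :=
    setIntegral_Ioi_le_of_intervalIntegral_mul_le hc (hd'.continuous.pow 2)
      (fun s => sq_nonneg _) hint.integrableOn fun T hT =>
        intervalIntegral_mul_deriv_sq_le ha hμ hd hd' hode hpos hq'nonpos (hc.le.trans hT)
  have hc2 : c ^ 2 = q 0 := sq_sqrt (hpos 0).le
  have hE : profileEnergy μ q 0 = μ * c ^ 4 / 2 := by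
    rw [profileEnergy, hq'0, ← hc2]; ring
  rw [integral_deriv_sq_of_even heven, ← intervalIntegral.integral_interval_add_Ioi
    hint.integrableOn hint.integrableOn]
  calc 2 * ((∫ s in 0..c, deriv q s ^ 2) + ∫ s in Ioi c, deriv q s ^ 2)
      ≤ 2 * (μ ^ 2 * c ^ 3 / 3 + 3 * (μ * c ^ 4 / 2) / c) := by rw [← hE]; gcongr
    _ = (2 * μ ^ 2 / 3 + 3 * μ) * (q 0 * c) := by rw [← hc2]; field_simp

end ProfileODE

theorem stmt_16 (a μ : ℝ) (ha : 0 < a) (hμ : 1 / 3 < μ) :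
    ∀ ε : ℝ, 0 < ε → ∃ δ : ℝ, 0 < δ ∧
      ∀ A : ℝ, 0 < A → A ≤ δ → ∀ q : ℝ → ℝ,
        (ContDiff ℝ 2 q ∧
        (∀ s : ℝ, deriv (deriv q) s * q s + a * s * deriv q s * q s
          + μ * q s + (1 / 3) * s * deriv q s = 0) ∧
        q 0 = A ∧ deriv q 0 = 0 ∧
        (∀ s : ℝ, 0 < q s) ∧
        (∀ s : ℝ, q (-s) = q s) ∧
        StrictAntiOn q (Set.Ioi 0) ∧
        Tendsto q atTop (nhds 0) ∧
        Tendsto (deriv q) atTop (nhds 0) ∧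
        Integrable q ∧
        Integrable (fun s : ℝ => q s ^ 2) ∧
        Integrable (fun s : ℝ => deriv q s ^ 2)) →
        (∫ s : ℝ, deriv q s ^ 2) ≤ ε := by
  intro ε hε
  have hμ0 : 0 < μ := by linarith
  set K := 2 * μ ^ 2 / 3 + 3 * μ
  have hK : 0 < K := by positivity
  refine ⟨min 1 (ε / K), by positivity, ?_⟩
  rintro A hA hAδ q ⟨hq, hode, rfl, hq'0, hpos, heven, hanti, -, -, -, -, hint⟩
  have hA1 : √(q 0) ≤ 1 := sqrt_le_one.2 (hAδ.trans (min_le_left _ _))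
  calc ∫ s, deriv q s ^ 2
      ≤ K * (q 0 * √(q 0)) := integral_deriv_sq_le_of_ode ha.le hμ0.le hq hode hq'0 hpos heven
        hanti.antitoneOn hint
    _ ≤ K * (ε / K) := by
        gcongr
        calc q 0 * √(q 0) ≤ q 0 := mul_le_of_le_one_right hA.le hA1
          _ ≤ ε / K := hAδ.trans (min_le_right _ _)
    _ = ε := mul_div_cancel₀ ε hK.ne'
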